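/- arXiv:2512.23211 — 3 statements merged into one kernel-verified Lean document; each statement's English description precedes it below -/
import Mathlib

section
/- (Discrete faithfulness from completeness.) Let δ, X each have finite support of size M, let P, Z be random variables with Z independent of δ conditional on X, and suppose the conditional distribution of (δ,P) given (X,Z) is complete with respect to bounded functions. Then for any bounded H(δ,P), if E[H(δ,P) | X, Z] = k(X) almost surely for some function k of X alone, there exists H₀(δ) such that H(δ,P) = H₀(δ) almost surely. -/
open MeasureTheory ProbabilityTheory

section Helpers

variable {M : ℕ} {Ω : Type*} {mΩ : MeasurableSpace Ω} {μ : Measure Ω} [IsFiniteMeasure μ]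

lemma aux_sum_indicator (Y : Ω → Fin M) (v : Fin M → ℝ) (ω : Ω) :
    v (Y ω) = ∑ j : Fin M, (Y ⁻¹' {j}).indicator (fun _ => v j) ω := by
  rw [Finset.sum_eq_single (Y ω)]
  · simp [Set.indicator_apply]
  · intro b _ hb
    simp [Set.indicator_apply, Set.mem_preimage, Ne.symm hb]
  · simp

lemma aux_integrable_comp (Y : Ω → Fin M) (hY : Measurable Y) (v : Fin M → ℝ) :
    Integrable (fun ω => v (Y ω)) μ := by
  simp_rw [fun ω => aux_sum_indicator Y v ω]
  exact integrable_finset_sum _ fun j _ =>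
    (integrable_const (v j)).indicator (hY (measurableSet_singleton j))

lemma aux_setIntegral_comp (Y : Ω → Fin M) (hY : Measurable Y) (v : Fin M → ℝ)
    (s : Set Ω) :
    ∫ ω in s, v (Y ω) ∂μ = ∑ i : Fin M, v i * (μ (Y ⁻¹' {i} ∩ s)).toReal := by
  simp_rw [fun ω => aux_sum_indicator Y v ω]
  rw [integral_finset_sum _ fun j _ =>
    ((integrable_const (v j)).indicator (hY (measurableSet_singleton j))).integrableOn]
  refine Finset.sum_congr rfl fun i _ => ?_
  rw [setIntegral_indicator (hY (measurableSet_singleton i)), setIntegral_const]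
  rw [Set.inter_comm, smul_eq_mul, mul_comm]
  rfl

lemma aux_ae_eq_of_comp (Y : Ω → Fin M) (hpos : ∀ j, 0 < μ (Y ⁻¹' {j})) (f g : Fin M → ℝ)
    (h : (fun ω => f (Y ω)) =ᵐ[μ] fun ω => g (Y ω)) : f = g := by
  funext j
  by_contra hne
  rw [Filter.EventuallyEq, ae_iff] at h
  have hsub : Y ⁻¹' {j} ⊆ {ω | ¬ f (Y ω) = g (Y ω)} := by
    intro ω hω
    have : Y ω = j := hω
    simp only [Set.mem_setOf_eq, this]
    exact hne
  exact absurd (measure_mono_null hsub h) (hpos j).ne'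

lemma aux_condexp_comap_discrete (Y : Ω → Fin M) (hY : Measurable Y) (f : Ω → ℝ)
    (hf : Integrable f μ) :
    μ[f | MeasurableSpace.comap Y inferInstance] =ᵐ[μ]
      fun ω => (∫ a in Y ⁻¹' {Y ω}, f a ∂μ) / (μ (Y ⁻¹' {Y ω})).toReal := by
  classical
  set g : Fin M → ℝ := fun j => (∫ a in Y ⁻¹' {j}, f a ∂μ) / (μ (Y ⁻¹' {j})).toReal with hg
  have hm : MeasurableSpace.comap Y inferInstance ≤ mΩ := hY.comap_le
  have hYm : Measurable[MeasurableSpace.comap Y inferInstance] Y :=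
    measurable_iff_comap_le.mpr le_rfl
  refine (ae_eq_condExp_of_forall_setIntegral_eq hm hf
    (fun s _ _ => (aux_integrable_comp Y hY g).integrableOn)
    (fun s hs _ => ?_)
    (((measurable_of_countable g).comp hYm).stronglyMeasurable.aestronglyMeasurable )).symm
  obtain ⟨B, hB, rfl⟩ := hs
  have hfib : ∀ j : Fin M, Y ⁻¹' {j} ∩ Y ⁻¹' B = if j ∈ B then Y ⁻¹' {j} else ∅ := by
    intro j
    split_ifs with hj
    · ext ω; simp only [Set.mem_inter_iff, Set.mem_preimage, Set.mem_singleton_iff]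
      exact ⟨fun h => h.1, fun h => ⟨h, h ▸ hj⟩⟩
    · ext ω; simp only [Set.mem_inter_iff, Set.mem_preimage, Set.mem_singleton_iff,
        Set.mem_empty_iff_false, iff_false, not_and]
      intro h; rw [h]; exact hj
  rw [aux_setIntegral_comp Y hY g (Y ⁻¹' B)]
  have hsplit : Y ⁻¹' B = ⋃ j, Y ⁻¹' B ∩ Y ⁻¹' {j} := by
    ext ω; simp
  rw [show ∫ x in Y ⁻¹' B, f x ∂μ = ∑ j : Fin M, ∫ x in Y ⁻¹' B ∩ Y ⁻¹' {j}, f x ∂μ by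
    rw [← integral_iUnion_fintype (fun j => (hY hB).inter (hY (measurableSet_singleton j)))
      (fun a b hab => by
        simp only [Function.onFun, Set.disjoint_left]
        rintro ω ⟨-, h1⟩ ⟨-, h2⟩
        exact hab ((Set.mem_singleton_iff.mp h1).symm.trans (Set.mem_singleton_iff.mp h2)))
      (fun j => hf.integrableOn), ← hsplit]]
  refine Finset.sum_congr rfl fun j _ => ?_
  rw [Set.inter_comm (Y ⁻¹' B), hfib j]
  split_ifs with hj
  · by_cases h0 : μ (Y ⁻¹' {j}) = 0
    · rw [h0, ENNReal.toReal_zero, mul_zero, Measure.restrict_eq_zero.mpr h0,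
        integral_zero_measure]
    · rw [hg]
      have hne : (μ (Y ⁻¹' {j})).toReal ≠ 0 :=
        ENNReal.toReal_ne_zero.mpr ⟨h0, measure_ne_top μ _⟩
      field_simp
  · simp

end Helpers

/-- Discrete faithfulness from completeness. With `δ, X` supported on `M`
points, `Z ⊥ δ | X`, and `(δ,P) | (X,Z)` complete w.r.t. bounded functions, any bounded
`H(δ,P)` whose conditional expectation given `(X,Z)` is a function of `X` alone must be
a.s. equal to a function of `δ` alone. -/
theorem discrete_faithfulness_from_completeness {M : ℕ}
    {Ω : Type*} {mΩ : MeasurableSpace Ω} [StandardBorelSpace Ω]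
    (μ : Measure Ω) [IsProbabilityMeasure μ]
    (δ X : Ω → Fin M) (P Z : Ω → ℝ)
    (hδ : Measurable δ) (hX : Measurable X) (hP : Measurable P) (hZ : Measurable Z)
    (hposX : ∀ j : Fin M, 0 < μ {ω | X ω = j})
    (hposδ : ∀ i : Fin M, 0 < μ {ω | δ ω = i})
    (hmX : MeasurableSpace.comap X inferInstance ≤ mΩ)
    (hCI : CondIndepFun (MeasurableSpace.comap X inferInstance) hmX Z δ μ)
    (hcomplete : ∀ h : Fin M × ℝ → ℝ, Measurable h → (∃ C, ∀ y, |h y| ≤ C) →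
      (μ[fun ω => h (δ ω, P ω) |
          MeasurableSpace.comap (fun ω => (X ω, Z ω)) inferInstance] =ᵐ[μ] 0) →
      (fun ω => h (δ ω, P ω)) =ᵐ[μ] 0)
    (H : Fin M × ℝ → ℝ) (hHm : Measurable H) (hHb : ∃ C, ∀ y, |H y| ≤ C)
    (k : Fin M → ℝ)
    (hk : μ[fun ω => H (δ ω, P ω) |
        MeasurableSpace.comap (fun ω => (X ω, Z ω)) inferInstance]
      =ᵐ[μ] fun ω => k (X ω)) :
    ∃ H₀ : Fin M → ℝ, (fun ω => H (δ ω, P ω)) =ᵐ[μ] fun ω => H₀ (δ ω) := by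
    classical
  have hposX' : ∀ j, 0 < μ (X ⁻¹' {j}) := hposX
  have hposδ' : ∀ i, 0 < μ (δ ⁻¹' {i}) := hposδ
  have hXZ : Measurable fun ω => (X ω, Z ω) := hX.prodMk hZ
  have hm2 : MeasurableSpace.comap (fun ω => (X ω, Z ω)) inferInstance ≤ mΩ := hXZ.comap_le
  set c : Fin M → ℝ := fun j => (μ (X ⁻¹' {j})).toReal with hcdef
  have hcpos : ∀ j, 0 < c j := fun j =>
    ENNReal.toReal_pos (hposX' j).ne' (measure_ne_top μ _)
  -- conditional probabilities given σ(X)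
  have hcondSet : ∀ t : Set Ω, MeasurableSet t →
      (μ⟦t | MeasurableSpace.comap X inferInstance⟧) =ᵐ[μ]
        fun ω => (μ (t ∩ X ⁻¹' {X ω})).toReal / c (X ω) := by
    intro t ht
    refine (aux_condexp_comap_discrete X hX _ ((integrable_const (1:ℝ)).indicator ht)).trans
      (Filter.Eventually.of_forall fun ω => ?_)
    show (∫ a in X ⁻¹' {X ω}, t.indicator (fun _ => (1:ℝ)) a ∂μ) / (μ (X ⁻¹' {X ω})).toReal
      = (μ (t ∩ X ⁻¹' {X ω})).toReal / c (X ω)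
    rw [setIntegral_indicator ht, setIntegral_const, smul_eq_mul, mul_one, Set.inter_comm]
    rfl
  -- key product formula
  have hkey : ∀ (i j : Fin M) (A : Set ℝ), MeasurableSet A →
      (μ (δ ⁻¹' {i} ∩ (X ⁻¹' {j} ∩ Z ⁻¹' A))).toReal =
        (μ (δ ⁻¹' {i} ∩ X ⁻¹' {j})).toReal * (μ (Z ⁻¹' A ∩ X ⁻¹' {j})).toReal / c j := by
    intro i j A hA
    have hCI' := (condIndepFun_iff_condExp_inter_preimage_eq_mul hZ hδ).mp hCI A {i} hA
      (measurableSet_singleton i)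
    have h1 := hcondSet (Z ⁻¹' A ∩ δ ⁻¹' {i}) ((hZ hA).inter (hδ (measurableSet_singleton i)))
    have h2 := hcondSet (Z ⁻¹' A) (hZ hA)
    have h3 := hcondSet (δ ⁻¹' {i}) (hδ (measurableSet_singleton i))
    have h4 : (fun ω => (fun j' => (μ (Z ⁻¹' A ∩ δ ⁻¹' {i} ∩ X ⁻¹' {j'})).toReal / c j') (X ω))
        =ᵐ[μ] fun ω => (fun j' => ((μ (Z ⁻¹' A ∩ X ⁻¹' {j'})).toReal / c j') *
          ((μ (δ ⁻¹' {i} ∩ X ⁻¹' {j'})).toReal / c j')) (X ω) :=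
      h1.symm.trans (hCI'.trans (h2.mul h3))
    have h5 := congrFun (aux_ae_eq_of_comp X hposX'
      (fun j' => (μ (Z ⁻¹' A ∩ δ ⁻¹' {i} ∩ X ⁻¹' {j'})).toReal / c j')
      (fun j' => ((μ (Z ⁻¹' A ∩ X ⁻¹' {j'})).toReal / c j') *
        ((μ (δ ⁻¹' {i} ∩ X ⁻¹' {j'})).toReal / c j')) h4) j
    have hset : δ ⁻¹' {i} ∩ (X ⁻¹' {j} ∩ Z ⁻¹' A) = Z ⁻¹' A ∩ δ ⁻¹' {i} ∩ X ⁻¹' {j} := by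
      ext ω; simp only [Set.mem_inter_iff]; tauto
    have hc0 : c j ≠ 0 := (hcpos j).ne'
    field_simp at h5
    rw [hset, eq_div_iff hc0]
    apply mul_right_cancel₀ hc0
    linear_combination c j * h5
  -- m1 ≤ m2
  have hm1le2 : MeasurableSpace.comap X inferInstance ≤
      MeasurableSpace.comap (fun ω => (X ω, Z ω)) inferInstance := by
    rintro s ⟨B, hB, rfl⟩
    exact ⟨Prod.fst ⁻¹' B, measurable_fst hB, rfl⟩
  have hXm2 : Measurable[MeasurableSpace.comap (fun ω => (X ω, Z ω)) inferInstance] X :=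
    measurable_iff_comap_le.mpr hm1le2
  -- conditional expectation of a function of δ given m2
  have hcond2 : ∀ v : Fin M → ℝ,
      μ[(fun ω => v (δ ω)) | MeasurableSpace.comap (fun ω => (X ω, Z ω)) inferInstance] =ᵐ[μ]
        fun ω => ∑ i : Fin M, v i * ((μ (δ ⁻¹' {i} ∩ X ⁻¹' {X ω})).toReal / c (X ω)) := by
    intro v
    set g : Fin M → ℝ := fun j => ∑ i : Fin M,
      v i * ((μ (δ ⁻¹' {i} ∩ X ⁻¹' {j})).toReal / c j) with hgdef
    refine (ae_eq_condExp_of_forall_setIntegral_eq hm2 (aux_integrable_comp δ hδ v)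
      (fun s _ _ => (aux_integrable_comp X hX g).integrableOn)
      (fun s hs _ => ?_)
      (((measurable_of_countable g).comp hXm2).stronglyMeasurable.aestronglyMeasurable)).symm
    obtain ⟨B, hB, rfl⟩ := hs
    set sect : Fin M → Set ℝ := fun j => Prod.mk j ⁻¹' B with hsect
    have hsectm : ∀ j, MeasurableSet (sect j) := fun j => measurable_prodMk_left hB
    have hsplit : (fun ω => (X ω, Z ω)) ⁻¹' B = ⋃ j, X ⁻¹' {j} ∩ Z ⁻¹' (sect j) := by
      ext ω
      simp only [Set.mem_preimage, Set.mem_iUnion, Set.mem_inter_iff, Set.mem_singleton_iff]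
      exact ⟨fun h => ⟨X ω, rfl, h⟩, fun ⟨j, hj, h⟩ => by rw [← hj] at h; exact h⟩
    have hmeas : ∀ j, MeasurableSet (X ⁻¹' {j} ∩ Z ⁻¹' (sect j)) := fun j =>
      (hX (measurableSet_singleton j)).inter (hZ (hsectm j))
    have hdisj : Pairwise (Function.onFun Disjoint fun j => X ⁻¹' {j} ∩ Z ⁻¹' (sect j)) := by
      intro a b hab
      simp only [Function.onFun, Set.disjoint_left, Set.mem_inter_iff, Set.mem_preimage,
        Set.mem_singleton_iff]
      rintro ω ⟨h1, -⟩ ⟨h2, -⟩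
      exact hab (h1.symm.trans h2)
    rw [hsplit,
      integral_iUnion_fintype hmeas hdisj (fun j => (aux_integrable_comp X hX g).integrableOn),
      integral_iUnion_fintype hmeas hdisj (fun j => (aux_integrable_comp δ hδ v).integrableOn)]
    refine Finset.sum_congr rfl fun j _ => ?_
    rw [aux_setIntegral_comp δ hδ v _, aux_setIntegral_comp X hX g _]
    rw [Finset.sum_eq_single j (fun b _ hb => by
        have : X ⁻¹' {b} ∩ (X ⁻¹' {j} ∩ Z ⁻¹' (sect j)) = ∅ := by
          ext ω
          simp only [Set.mem_inter_iff, Set.mem_preimage, Set.mem_singleton_iff,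
            Set.mem_empty_iff_false, iff_false, not_and]
          intro h1 h2
          exact absurd (h1.symm.trans h2) hb
        rw [this]
        simp) (by simp)]
    have hXj : X ⁻¹' {j} ∩ (X ⁻¹' {j} ∩ Z ⁻¹' (sect j)) = X ⁻¹' {j} ∩ Z ⁻¹' (sect j) := by
      rw [← Set.inter_assoc, Set.inter_self]
    rw [hXj, hgdef]
    rw [Finset.sum_mul]
    refine Finset.sum_congr rfl fun i _ => ?_
    rw [hkey i j (sect j) (hsectm j), Set.inter_comm (Z ⁻¹' (sect j))]
    field_simp
  -- the matrix and its injectivity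
  set A : Matrix (Fin M) (Fin M) ℝ :=
    fun j i => (μ (δ ⁻¹' {i} ∩ X ⁻¹' {j})).toReal / c j with hAdef
  have hinj : Function.Injective A.mulVecLin := by
    rw [← LinearMap.ker_eq_bot, LinearMap.ker_eq_bot']
    intro v hv
    have hv' : ∀ j, ∑ i : Fin M, v i * ((μ (δ ⁻¹' {i} ∩ X ⁻¹' {j})).toReal / c j) = 0 := by
      intro j
      have := congrFun hv j
      simp only [Matrix.mulVecLin_apply, Matrix.mulVec, dotProduct, hAdef,
        Pi.zero_apply] at this
      rw [← this]
      exact Finset.sum_congr rfl fun i _ => mul_comm _ _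
    have h0 : μ[(fun ω => v (δ ω)) |
        MeasurableSpace.comap (fun ω => (X ω, Z ω)) inferInstance] =ᵐ[μ] 0 :=
      (hcond2 v).trans (Filter.Eventually.of_forall fun ω => hv' (X ω))
    have hz := hcomplete (fun y => v y.1) ((measurable_of_countable v).comp measurable_fst)
      ⟨∑ i : Fin M, |v i|, fun y =>
        Finset.single_le_sum (fun i _ => abs_nonneg (v i)) (Finset.mem_univ y.1)⟩ h0
    exact aux_ae_eq_of_comp δ hposδ' v (fun _ => 0) hz
  obtain ⟨H₀, hH₀⟩ := LinearMap.injective_iff_surjective.mp hinj k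
  -- conditional expectation of H₀ ∘ δ
  have hcondH₀ : μ[(fun ω => H₀ (δ ω)) |
      MeasurableSpace.comap (fun ω => (X ω, Z ω)) inferInstance] =ᵐ[μ] fun ω => k (X ω) := by
    refine (hcond2 H₀).trans (Filter.Eventually.of_forall fun ω => ?_)
    show (∑ i : Fin M, H₀ i * ((μ (δ ⁻¹' {i} ∩ X ⁻¹' {X ω})).toReal / c (X ω))) = k (X ω)
    have := congrFun hH₀ (X ω)
    simp only [Matrix.mulVecLin_apply, Matrix.mulVec, dotProduct, hAdef] at this
    rw [← this]
    exact Finset.sum_congr rfl fun i _ => mul_comm _ _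
  -- integrability
  obtain ⟨C, hC⟩ := hHb
  have hintH : Integrable (fun ω => H (δ ω, P ω)) μ := by
    refine Integrable.mono' (integrable_const C)
      ((hHm.comp (hδ.prodMk hP)).aestronglyMeasurable)
      (Filter.Eventually.of_forall fun ω => ?_)
    simpa [Real.norm_eq_abs] using hC (δ ω, P ω)
  have hintH₀ : Integrable (fun ω => H₀ (δ ω)) μ := aux_integrable_comp δ hδ H₀
  -- conditional expectation of difference is 0
  have hdiff : μ[(fun ω => H (δ ω, P ω) - H₀ (δ ω)) |
      MeasurableSpace.comap (fun ω => (X ω, Z ω)) inferInstance] =ᵐ[μ] 0 := by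
    refine (condExp_sub hintH hintH₀ _).trans ?_
    refine (hk.sub hcondH₀).trans (Filter.Eventually.of_forall fun ω => ?_)
    simp
  have hfinal := hcomplete (fun y => H y - H₀ y.1)
    (hHm.sub ((measurable_of_countable H₀).comp measurable_fst))
    ⟨C + ∑ i : Fin M, |H₀ i|, fun y => by
      calc |H y - H₀ y.1| ≤ |H y| + |H₀ y.1| := abs_sub _ _
        _ ≤ C + ∑ i : Fin M, |H₀ i| := add_le_add (hC y)
            (Finset.single_le_sum (fun i _ => abs_nonneg (H₀ i)) (Finset.mem_univ y.1))⟩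
    hdiff
  refine ⟨H₀, ?_⟩
  filter_upwards [hfinal] with ω hω
  have h9 : H (δ ω, P ω) - H₀ (δ ω) = 0 := hω
  linarith
end

section
/- (Recentered instrument characterization.) Let F be a probability distribution of (S,P,X,Z) with all variables in L². For h ∈ L²_F(S,P) (R-valued), the following are equivalent: (i) E_F[h(S,P)|X,Z] = k(X) a.s. for some k ∈ L²_F(X); (ii) E_F[h(S,P)·(R(X,Z) − E_F[R(X,Z)|X])] = 0 for every R ∈ L²_F(X,Z). -/
open MeasureTheory

/-- Product of two L² functions is integrable. -/
lemma mul_int_L2 {α : Type*} {m0 : MeasurableSpace α} {μ : Measure α} {f g : α → ℝ}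
    (hf : MemLp f 2 μ) (hg : MemLp g 2 μ) : Integrable (fun x => f x * g x) μ := by
  have h1 := hf.integrable_sq
  have h2 := hg.integrable_sq
  refine (h1.add h2).mono' (hf.aestronglyMeasurable.mul hg.aestronglyMeasurable) ?_
  filter_upwards with x
  simp only [Pi.add_apply, Real.norm_eq_abs, abs_mul]
  nlinarith [sq_nonneg (|f x| - |g x|), sq_abs (f x), sq_abs (g x), abs_nonneg (f x),
    abs_nonneg (g x)]

/-- Conditional expectation preserves membership in L². -/
lemma memL2_condexp {α : Type*} {m m0 : MeasurableSpace α} (hm : m ≤ m0) {μ : Measure α}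
    [IsFiniteMeasure μ] {f : α → ℝ} (hf : MemLp f 2 μ) : MemLp (μ[f|m]) 2 μ := by
  haveI : SigmaFinite (μ.trim hm) := inferInstance
  set fL : Lp ℝ 2 μ := hf.toLp f with hfL
  have hae : ((condExpL2 ℝ ℝ hm fL : α →₂[μ] ℝ) : α → ℝ) =ᵐ[μ] μ[f|m] := by
    refine ae_eq_condExp_of_forall_setIntegral_eq hm (hf.integrable one_le_two)
      (fun s _ _ => (integrable_condExpL2_of_isFiniteMeasure hm).integrableOn)
      (fun s hs hμs => ?_) (aestronglyMeasurable_condExpL2 hm fL)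
    rw [integral_condExpL2_eq hm fL hs hμs.ne]
    exact setIntegral_congr_ae (hm s hs) ((hf.coeFn_toLp).mono fun x hx _ => hx)
  exact (Lp.memLp (condExpL2 ℝ ℝ hm fL : α →₂[μ] ℝ)).ae_eq hae

/-- Integrating a product against a conditional expectation. -/
lemma integral_mul_condexp_eq {α : Type*} {m m0 : MeasurableSpace α} (hm : m ≤ m0)
    {μ : Measure α} [IsFiniteMeasure μ] {f g : α → ℝ} (hf : StronglyMeasurable[m] f)
    (hfg : Integrable (f * g) μ) (hg : Integrable g μ) :
    ∫ x, f x * (μ[g|m]) x ∂μ = ∫ x, f x * g x ∂μ := by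
  haveI : SigmaFinite (μ.trim hm) := inferInstance
  have h1 : μ[f * g|m] =ᵐ[μ] f * μ[g|m] := condExp_mul_of_stronglyMeasurable_left hf hfg hg
  have h2 : ∫ x, (μ[f * g|m]) x ∂μ = ∫ x, (f * g) x ∂μ := integral_condExp hm
  calc ∫ x, f x * (μ[g|m]) x ∂μ = ∫ x, (μ[f * g|m]) x ∂μ := (integral_congr_ae h1).symm
    _ = ∫ x, f x * g x ∂μ := h2

/-- Doob–Dynkin type factorization for real-valued comap-measurable functions. -/
lemma exists_factor {Ω β : Type*} [mβ : MeasurableSpace β] {φ : Ω → β} {G : Ω → ℝ}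
    (hG : Measurable[mβ.comap φ] G) : ∃ g : β → ℝ, Measurable g ∧ ∀ ω, g (φ ω) = G ω := by
  classical
  have hq : ∀ q : ℚ, ∃ B : Set β, MeasurableSet B ∧ φ ⁻¹' B = G ⁻¹' Set.Iio (q : ℝ) :=
    fun q => hG measurableSet_Iio
  choose B hBm hBeq using hq
  have hmem : ∀ (ω : Ω) (q : ℚ), φ ω ∈ B q ↔ G ω < (q : ℝ) := by
    intro ω q
    constructor
    · intro hω
      have : ω ∈ φ ⁻¹' B q := hω
      rw [hBeq q] at this
      exact this
    · intro hω
      have : ω ∈ φ ⁻¹' B q := by rw [hBeq q]; exact hω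
      exact this
  refine ⟨fun b => (⨅ q : ℚ, if b ∈ B q then ((q : ℝ) : EReal) else ⊤).toReal,
    Measurable.ereal_toReal (Measurable.iInf fun q =>
      Measurable.ite (hBm q) measurable_const measurable_const), fun ω => ?_⟩
  have key : (⨅ q : ℚ, if φ ω ∈ B q then ((q : ℝ) : EReal) else ⊤) = ((G ω : ℝ) : EReal) := by
    apply le_antisymm
    · refine le_of_forall_gt_imp_ge_of_dense fun c hc => ?_
      obtain ⟨q, hq1, hq2⟩ := EReal.exists_rat_btwn_of_lt hc
      refine iInf_le_of_le q ?_
      rw [if_pos ((hmem ω q).2 (by exact_mod_cast hq1))]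
      exact hq2.le
    · refine le_iInf fun q => ?_
      split_ifs with hq
      · exact_mod_cast ((hmem ω q).1 hq).le
      · exact le_top
  show (⨅ q : ℚ, if φ ω ∈ B q then ((q : ℝ) : EReal) else ⊤).toReal = G ω
  rw [key, EReal.toReal_coe]

/-- Recentered instrument characterization. For square-integrable
`h(S,P)`, having a conditional expectation given `(X,Z)` that is a (square-integrable)
function of `X` alone is equivalent to orthogonality to all recentered instruments
`R(X,Z) − E[R(X,Z)|X]`. -/
theorem recentered_instrument_characterization
    {Ω : Type*} {mΩ : MeasurableSpace Ω}
    (μ : Measure Ω) [IsProbabilityMeasure μ]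
    (S P X Z : Ω → ℝ)
    (hS : Measurable S) (hP : Measurable P) (hX : Measurable X) (hZ : Measurable Z)
    (h : ℝ × ℝ → ℝ) (hh : Measurable h)
    (hL2 : MemLp (fun ω => h (S ω, P ω)) 2 μ) :
    (∃ k : ℝ → ℝ, Measurable k ∧ MemLp (fun ω => k (X ω)) 2 μ ∧
      μ[fun ω => h (S ω, P ω) |
          MeasurableSpace.comap (fun ω => (X ω, Z ω)) inferInstance]
        =ᵐ[μ] fun ω => k (X ω)) ↔
    (∀ R : ℝ × ℝ → ℝ, Measurable R → MemLp (fun ω => R (X ω, Z ω)) 2 μ →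
      (∫ ω, h (S ω, P ω) *
        (R (X ω, Z ω) -
          (μ[fun ω' => R (X ω', Z ω') | MeasurableSpace.comap X inferInstance]) ω) ∂μ)
        = 0) := by
  set mXZ : MeasurableSpace Ω :=
    MeasurableSpace.comap (fun ω => (X ω, Z ω)) inferInstance with hmXZdef
  set mX : MeasurableSpace Ω := MeasurableSpace.comap X inferInstance with hmXdef
  have hmXZ : mXZ ≤ mΩ := (hX.prodMk hZ).comap_le
  have hmX : mX ≤ mΩ := hX.comap_le
  have hXle : mX ≤ mXZ := by
    have h1 : mX = MeasurableSpace.comap (fun ω => (X ω, Z ω))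
        (MeasurableSpace.comap Prod.fst inferInstance) := by
      rw [hmXdef, MeasurableSpace.comap_comp]
      rfl
    rw [h1]
    exact MeasurableSpace.comap_mono measurable_fst.comap_le
  set H : Ω → ℝ := fun ω => h (S ω, P ω) with hHdef
  have hHi : Integrable H μ := hL2.integrable one_le_two
  constructor
  · rintro ⟨k, hkm, hk2, hk⟩ R hRm hR2
    set G : Ω → ℝ := fun ω => R (X ω, Z ω) with hGdef
    have hGsm : StronglyMeasurable[mXZ] G :=
      (hRm.comp (comap_measurable _)).stronglyMeasurable
    have hGi : Integrable G μ := hR2.integrable one_le_two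
    set EG : Ω → ℝ := μ[G|mX] with hEGdef
    have hEG2 : MemLp EG 2 μ := memL2_condexp hmX hR2
    have hKsm : StronglyMeasurable[mX] (fun ω => k (X ω)) :=
      (hkm.comp (comap_measurable X)).stronglyMeasurable
    -- ∫ G * H = ∫ G * (k ∘ X)
    have e1 : ∫ ω, G ω * H ω ∂μ = ∫ ω, G ω * k (X ω) ∂μ := by
      have t := integral_mul_condexp_eq hmXZ hGsm
        (show Integrable (G * H) μ from mul_int_L2 hR2 hL2) hHi
      exact t.symm.trans (integral_congr_ae (hk.mono fun ω hω =>
        congrArg (fun y => G ω * y) hω))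
    -- ∫ EG * H = ∫ EG * (k ∘ X)
    have e2 : ∫ ω, EG ω * H ω ∂μ = ∫ ω, EG ω * k (X ω) ∂μ := by
      have t := integral_mul_condexp_eq hmXZ (stronglyMeasurable_condExp.mono hXle)
        (show Integrable (EG * H) μ from mul_int_L2 hEG2 hL2) hHi
      exact t.symm.trans (integral_congr_ae (hk.mono fun ω hω =>
        congrArg (fun y => EG ω * y) hω))
    -- ∫ (k ∘ X) * EG = ∫ (k ∘ X) * G
    have e3 : ∫ ω, k (X ω) * EG ω ∂μ = ∫ ω, k (X ω) * G ω ∂μ :=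
      integral_mul_condexp_eq hmX hKsm
        (show Integrable ((fun ω => k (X ω)) * G) μ from mul_int_L2 hk2 hR2) hGi
    have hint1 : Integrable (fun ω => H ω * G ω) μ := mul_int_L2 hL2 hR2
    have hint2 : Integrable (fun ω => H ω * EG ω) μ := mul_int_L2 hL2 hEG2
    have : (∫ ω, H ω * (G ω - EG ω) ∂μ) = ∫ ω, H ω * G ω ∂μ - ∫ ω, H ω * EG ω ∂μ := by
      rw [← integral_sub hint1 hint2]
      congr 1
      funext ω
      ring
    rw [this]
    have c1 : ∫ ω, H ω * G ω ∂μ = ∫ ω, G ω * H ω ∂μ := by simp_rw [mul_comm]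
    have c2 : ∫ ω, H ω * EG ω ∂μ = ∫ ω, EG ω * H ω ∂μ := by simp_rw [mul_comm]
    have c3 : ∫ ω, G ω * k (X ω) ∂μ = ∫ ω, k (X ω) * G ω ∂μ := by simp_rw [mul_comm]
    have c4 : ∫ ω, EG ω * k (X ω) ∂μ = ∫ ω, k (X ω) * EG ω ∂μ := by simp_rw [mul_comm]
    rw [c1, c2, e1, e2, c3, c4, e3]
    ring
  · intro hyp
    set G : Ω → ℝ := μ[H|mXZ] with hGdef
    have hGsm : StronglyMeasurable[mXZ] G := stronglyMeasurable_condExp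
    have hG2 : MemLp G 2 μ := memL2_condexp hmXZ hL2
    have hGi : Integrable G μ := integrable_condExp
    obtain ⟨g, hgmeas, hgeq⟩ := exists_factor (φ := fun ω => (X ω, Z ω)) hGsm.measurable
    have hgfun : (fun ω => g (X ω, Z ω)) = G := funext hgeq
    have hg2 : MemLp (fun ω => g (X ω, Z ω)) 2 μ := by rw [hgfun]; exact hG2
    have h0 := hyp g hgmeas hg2
    rw [show (fun ω' => g (X ω', Z ω')) = G from hgfun] at h0
    simp_rw [hgeq] at h0
    -- h0 : ∫ ω, H ω * (G ω - μ[G|mX] ω) ∂μ = 0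
    set EG : Ω → ℝ := μ[G|mX] with hEGdef
    have hEG2 : MemLp EG 2 μ := memL2_condexp hmX hG2
    have hEGi : Integrable EG μ := integrable_condExp
    set D : Ω → ℝ := fun ω => G ω - EG ω with hDdef
    have hD2 : MemLp D 2 μ := hG2.sub hEG2
    have hDi : Integrable D μ := hGi.sub hEGi
    have hDsm : StronglyMeasurable[mXZ] D :=
      hGsm.sub (stronglyMeasurable_condExp.mono hXle)
    -- ∫ D * G = ∫ D * H = 0
    have key1 : ∫ ω, D ω * G ω ∂μ = 0 := by
      have : ∫ ω, D ω * (μ[H|mXZ]) ω ∂μ = ∫ ω, D ω * H ω ∂μ :=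
        integral_mul_condexp_eq hmXZ hDsm
          (show Integrable (D * H) μ from mul_int_L2 hD2 hL2) hHi
      rw [← hGdef] at this
      rw [this]
      rw [← h0]
      simp_rw [mul_comm]
      rfl
    -- ∫ EG * D = 0
    have key2 : ∫ ω, EG ω * D ω ∂μ = 0 := by
      have hsub : μ[D|mX] =ᵐ[μ] fun ω => (μ[G|mX]) ω - (μ[EG|mX]) ω := by
        have := condExp_sub (m := mX) (μ := μ) hGi hEGi
        filter_upwards [this] with ω hω
        exact hω
      have hEGfix : μ[EG|mX] = EG := by
        haveI : SigmaFinite (μ.trim hmX) := inferInstance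
        exact condExp_of_stronglyMeasurable hmX stronglyMeasurable_condExp hEGi
      have hD0 : μ[D|mX] =ᵐ[μ] fun _ => (0 : ℝ) := by
        filter_upwards [hsub] with ω hω
        rw [hω, hEGfix]
        simp [hEGdef]
      have := integral_mul_condexp_eq hmX stronglyMeasurable_condExp
        (show Integrable (EG * D) μ from mul_int_L2 hEG2 hD2) hDi
      rw [← this]
      have : (fun ω => EG ω * (μ[D|mX]) ω) =ᵐ[μ] fun _ => (0 : ℝ) := by
        filter_upwards [hD0] with ω hω
        rw [hω, mul_zero]
      rw [integral_congr_ae this, integral_zero]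
    -- ∫ D² = 0
    have keysq : ∫ ω, D ω ^ 2 ∂μ = 0 := by
      have expand : ∫ ω, D ω ^ 2 ∂μ = ∫ ω, D ω * G ω ∂μ - ∫ ω, EG ω * D ω ∂μ := by
        rw [← integral_sub (mul_int_L2 hD2 hG2) (mul_int_L2 hEG2 hD2)]
        congr 1
        funext ω
        simp only [hDdef]
        ring
      rw [expand, key1, key2, sub_zero]
    have hDzero : D =ᵐ[μ] fun _ => (0 : ℝ) := by
      have hnn : 0 ≤ᵐ[μ] fun ω => D ω ^ 2 := Filter.Eventually.of_forall fun ω => sq_nonneg _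
      have hDsqi : Integrable (fun ω => D ω ^ 2) μ := hD2.integrable_sq
      have := (integral_eq_zero_iff_of_nonneg_ae hnn hDsqi).1 keysq
      filter_upwards [this] with ω hω
      have : D ω ^ 2 = 0 := hω
      exact pow_eq_zero_iff (n := 2) (by norm_num) |>.1 this
    -- factor EG through X
    obtain ⟨k, hkmeas, hkeq⟩ := exists_factor (φ := X)
      (stronglyMeasurable_condExp (m := mX) (f := G) (μ := μ)).measurable
    have hkfun : (fun ω => k (X ω)) = EG := funext hkeq
    refine ⟨k, hkmeas, by rw [hkfun]; exact hEG2, ?_⟩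
    have hGEG : G =ᵐ[μ] EG := by
      filter_upwards [hDzero] with ω hω
      have : G ω - EG ω = 0 := hω
      linarith
    calc μ[H|mXZ] = G := hGdef.symm ▸ rfl
      _ =ᵐ[μ] EG := hGEG
      _ = fun ω => k (X ω) := hkfun.symm
end

section
/- (Faithfulness under a price index, discrete case.) Let δ, X, Z, P be random variables with discrete supports. Suppose: (a) Z ⊥ δ | X; (b) there is a function λ(x,z), invertible in z for each x, such that P ⊥ (X,Z) | (λ(X,Z), δ); (c) the conditional distribution (δ,P)|(X,Z) is complete with respect to bounded functions; (d) the support of (X, λ(X,Z)) is a product set with all joint probabilities positive. Then any bounded H(δ,P) with E[H(δ,P)|X,Z] = k(X) a.s. satisfies H(δ,P) = H₀(δ) a.s. for some H₀. -/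
open MeasureTheory

lemma aux_integrable {Ω γ : Type*} [MeasurableSpace Ω] (μ : Measure Ω)
    [IsFiniteMeasure μ] [Fintype γ] [MeasurableSpace γ] [MeasurableSingletonClass γ]
    {g : Ω → γ} (hg : Measurable g) (f : γ → ℝ) :
    Integrable (fun ω => f (g ω)) μ := by
  have hfm : Measurable f := measurable_of_countable f
  refine Integrable.mono' (integrable_const (∑ y, |f y|))
    ((hfm.comp hg).aestronglyMeasurable) (Filter.Eventually.of_forall fun ω => ?_)
  calc ‖f (g ω)‖ = |f (g ω)| := rfl
    _ ≤ ∑ y, |f y| :=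
      Finset.single_le_sum (f := fun y => |f y|) (fun y _ => abs_nonneg _) (Finset.mem_univ _)

lemma aux_integral_decomp {Ω γ : Type*} [MeasurableSpace Ω] (μ : Measure Ω)
    [IsFiniteMeasure μ] [Fintype γ] [MeasurableSpace γ] [MeasurableSingletonClass γ]
    {g : Ω → γ} (hg : Measurable g) (f : γ → ℝ) (S : Set Ω) :
    ∫ ω in S, f (g ω) ∂μ = ∑ y, f y * (μ (S ∩ g ⁻¹' {y})).toReal := by
  have hfm : Measurable f := measurable_of_countable f
  rw [← integral_map hg.aemeasurable hfm.aestronglyMeasurable]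
  have : IsFiniteMeasure (Measure.map g (μ.restrict S)) :=
    Measure.isFiniteMeasure_map _ _
  rw [integral_fintype _]
  refine Finset.sum_congr rfl fun y _ => ?_
  rw [Measure.real_def, Measure.map_apply hg (measurableSet_singleton y),
    Measure.restrict_apply (hg (measurableSet_singleton y)), Set.inter_comm, smul_eq_mul,
    mul_comm]
  exact Integrable.of_finite


/-- Faithfulness under a price index, discrete case. With (a) `Z ⊥ δ | X`,
(b) `P ⊥ (X,Z) | (λ(X,Z), δ)` for an index `λ` invertible in `z`, (c) completeness of
`(δ,P) | (X,Z)`, and (d) full product support of `(X, λ(X,Z))` with positive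
probabilities, any `H(δ,P)` with `E[H(δ,P) | X=x, Z=z] = k(x)` is a.s. a function of `δ`
alone. -/
theorem discrete_price_index_faithfulness
    {Dt Xt Zt Pt Lt : Type*}
    [Fintype Dt] [Fintype Xt] [Fintype Zt] [Fintype Pt] [Fintype Lt]
    [DecidableEq Dt] [DecidableEq Xt] [DecidableEq Zt] [DecidableEq Pt] [DecidableEq Lt]
    [MeasurableSpace Dt] [MeasurableSingletonClass Dt]
    [MeasurableSpace Xt] [MeasurableSingletonClass Xt]
    [MeasurableSpace Zt] [MeasurableSingletonClass Zt]
    [MeasurableSpace Pt] [MeasurableSingletonClass Pt]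
    {Ω : Type*} [MeasurableSpace Ω] (μ : Measure Ω) [IsProbabilityMeasure μ]
    (δ : Ω → Dt) (X : Ω → Xt) (Z : Ω → Zt) (P : Ω → Pt)
    (hδ : Measurable δ) (hX : Measurable X) (hZ : Measurable Z) (hP : Measurable P)
    (lam : Xt → Zt → Lt)
    (hlam_inj : ∀ x, Function.Injective (lam x))
    -- (a) Z ⊥ δ | X :
    (hCI_a : ∀ (z : Zt) (d : Dt) (x : Xt),
      μ {ω | Z ω = z ∧ δ ω = d ∧ X ω = x} * μ {ω | X ω = x} =
        μ {ω | Z ω = z ∧ X ω = x} * μ {ω | δ ω = d ∧ X ω = x})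
    -- (b) P ⊥ (X,Z) | (λ(X,Z), δ) :
    (hCI_b : ∀ (p : Pt) (x : Xt) (z : Zt) (d : Dt),
      μ {ω | P ω = p ∧ X ω = x ∧ Z ω = z ∧ δ ω = d} *
          μ {ω | lam (X ω) (Z ω) = lam x z ∧ δ ω = d} =
        μ {ω | P ω = p ∧ lam (X ω) (Z ω) = lam x z ∧ δ ω = d} *
          μ {ω | X ω = x ∧ Z ω = z ∧ δ ω = d})
    -- (c) completeness of (δ,P) | (X,Z) :
    (hcomplete : ∀ h : Dt × Pt → ℝ,
      (∀ (x : Xt) (z : Zt), 0 < μ {ω | X ω = x ∧ Z ω = z} →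
        (∫ ω in {ω | X ω = x ∧ Z ω = z}, h (δ ω, P ω) ∂μ) = 0) →
      (fun ω => h (δ ω, P ω)) =ᵐ[μ] 0)
    -- (d) full product support of (X, λ(X,Z)) :
    (hprod : ∀ (x : Xt) (l : Lt), 0 < μ {ω | X ω = x ∧ lam (X ω) (Z ω) = l})
    (H : Dt × Pt → ℝ) (k : Xt → ℝ)
    (hk : ∀ (x : Xt) (z : Zt), 0 < μ {ω | X ω = x ∧ Z ω = z} →
      (∫ ω in {ω | X ω = x ∧ Z ω = z}, H (δ ω, P ω) ∂μ) =
        k x * (μ {ω | X ω = x ∧ Z ω = z}).toReal) :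
    ∃ H₀ : Dt → ℝ, (fun ω => H (δ ω, P ω)) =ᵐ[μ] fun ω => H₀ (δ ω) := by
  classical
  -- Ω is nonempty, so Lt is nonempty
  have hΩne : Nonempty Ω := by
    by_contra h
    rw [not_nonempty_iff] at h
    have h1 : μ Set.univ = 1 := measure_univ
    rw [Set.univ_eq_empty_iff.mpr h] at h1
    simp at h1
  obtain ⟨ω₀⟩ := hΩne
  set l₀ : Lt := lam (X ω₀) (Z ω₀) with hl₀
  -- the "conditional expectation of H(d,P) given λ = l, δ = d"
  set G : Dt → Lt → ℝ := fun d l =>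
      (∑ p, H (d, p) * (μ {ω | P ω = p ∧ lam (X ω) (Z ω) = l ∧ δ ω = d}).toReal) /
        (μ {ω | lam (X ω) (Z ω) = l ∧ δ ω = d}).toReal with hG
  -- Step: for each x, lam x is "surjective with positive mass"
  have hsurj : ∀ (x : Xt) (l : Lt), ∃ z : Zt, lam x z = l ∧ 0 < μ {ω | X ω = x ∧ Z ω = z} := by
    intro x l
    have hpos := hprod x l
    obtain ⟨ω, hω⟩ := nonempty_of_measure_ne_zero hpos.ne'
    obtain ⟨hωX, hωl⟩ := hω
    refine ⟨Z ω, by rw [← hωX]; exact hωl, ?_⟩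
    refine lt_of_lt_of_le hpos (measure_mono ?_)
    rintro ω' ⟨h1, h2⟩
    refine ⟨h1, ?_⟩
    have h2' : lam x (Z ω') = l := by rw [h1] at h2; exact h2
    have hωl' : lam x (Z ω) = l := by rw [hωX] at hωl; exact hωl
    exact hlam_inj x (h2'.trans hωl'.symm)
  -- decomposition of set integrals over (δ, P)
  have hdec : ∀ (f : Dt × Pt → ℝ) (x : Xt) (z : Zt),
      (∫ ω in {ω | X ω = x ∧ Z ω = z}, f (δ ω, P ω) ∂μ) =
        ∑ d, ∑ p, f (d, p) * (μ {ω | P ω = p ∧ X ω = x ∧ Z ω = z ∧ δ ω = d}).toReal := by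
    intro f x z
    rw [aux_integral_decomp μ (hδ.prodMk hP) f _, Fintype.sum_prod_type]
    refine Finset.sum_congr rfl fun d _ => Finset.sum_congr rfl fun p _ => ?_
    have hseteq : {ω | X ω = x ∧ Z ω = z} ∩ (fun ω => (δ ω, P ω)) ⁻¹' {(d, p)} =
        {ω | P ω = p ∧ X ω = x ∧ Z ω = z ∧ δ ω = d} := by
      ext ω
      simp only [Set.mem_inter_iff, Set.mem_setOf_eq, Set.mem_preimage, Set.mem_singleton_iff,
        Prod.mk.injEq]
      tauto
    rw [hseteq]
  -- decomposition of set integrals over δ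
  have hdecD : ∀ (f : Dt → ℝ) (x : Xt) (z : Zt),
      (∫ ω in {ω | X ω = x ∧ Z ω = z}, f (δ ω) ∂μ) =
        ∑ d, f d * (μ {ω | X ω = x ∧ Z ω = z ∧ δ ω = d}).toReal := by
    intro f x z
    rw [aux_integral_decomp μ hδ f _]
    refine Finset.sum_congr rfl fun d _ => ?_
    have hseteq : {ω | X ω = x ∧ Z ω = z} ∩ δ ⁻¹' {d} =
        {ω | X ω = x ∧ Z ω = z ∧ δ ω = d} := by
      ext ω
      simp only [Set.mem_inter_iff, Set.mem_setOf_eq, Set.mem_preimage, Set.mem_singleton_iff]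
      tauto
    rw [hseteq]
  -- Step (b) consequence: inner P-sum collapses to G
  have key1 : ∀ (d : Dt) (x : Xt) (z : Zt),
      (∑ p, H (d, p) * (μ {ω | P ω = p ∧ X ω = x ∧ Z ω = z ∧ δ ω = d}).toReal) =
        G d (lam x z) * (μ {ω | X ω = x ∧ Z ω = z ∧ δ ω = d}).toReal := by
    intro d x z
    by_cases hc : μ {ω | lam (X ω) (Z ω) = lam x z ∧ δ ω = d} = 0
    · have hm : μ {ω | X ω = x ∧ Z ω = z ∧ δ ω = d} = 0 := by
        refine measure_mono_null ?_ hc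
        rintro ω ⟨h1, h2, h3⟩
        exact ⟨by rw [h1, h2], h3⟩
      have hp : ∀ p, μ {ω | P ω = p ∧ X ω = x ∧ Z ω = z ∧ δ ω = d} = 0 := by
        intro p
        refine measure_mono_null ?_ hc
        rintro ω ⟨_, h1, h2, h3⟩
        exact ⟨by rw [h1, h2], h3⟩
      simp [hm, hp]
    · have hcr : (μ {ω | lam (X ω) (Z ω) = lam x z ∧ δ ω = d}).toReal ≠ 0 := by
        simp [ENNReal.toReal_ne_zero, hc, measure_ne_top]
      have hstep : ∀ p, (μ {ω | P ω = p ∧ X ω = x ∧ Z ω = z ∧ δ ω = d}).toReal =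
          (μ {ω | P ω = p ∧ lam (X ω) (Z ω) = lam x z ∧ δ ω = d}).toReal *
            (μ {ω | X ω = x ∧ Z ω = z ∧ δ ω = d}).toReal /
              (μ {ω | lam (X ω) (Z ω) = lam x z ∧ δ ω = d}).toReal := by
        intro p
        have h2 := congrArg ENNReal.toReal (hCI_b p x z d)
        rw [ENNReal.toReal_mul, ENNReal.toReal_mul] at h2
        field_simp
        linarith [h2]
      simp only [hstep]
      rw [hG]
      simp only
      rw [div_mul_eq_mul_div, Finset.sum_mul, Finset.sum_div]
      exact Finset.sum_congr rfl fun p _ => by ring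
  -- Step (a) consequence: δ-mass inside (x,z)-cell factorizes
  have key2 : ∀ (d : Dt) (x : Xt) (z : Zt), 0 < μ {ω | X ω = x ∧ Z ω = z} →
      (μ {ω | X ω = x ∧ Z ω = z ∧ δ ω = d}).toReal =
        (μ {ω | X ω = x ∧ Z ω = z}).toReal *
          ((μ {ω | δ ω = d ∧ X ω = x}).toReal / (μ {ω | X ω = x}).toReal) := by
    intro d x z hq
    have hxpos : μ {ω | X ω = x} ≠ 0 := by
      intro h0
      refine absurd (measure_mono_null ?_ h0) hq.ne'
      rintro ω ⟨h1, _⟩; exact h1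
    have hxr : (μ {ω | X ω = x}).toReal ≠ 0 := by
      simp [ENNReal.toReal_ne_zero, hxpos, measure_ne_top]
    have hset1 : {ω | Z ω = z ∧ δ ω = d ∧ X ω = x} = {ω | X ω = x ∧ Z ω = z ∧ δ ω = d} := by
      ext ω; simp only [Set.mem_setOf_eq]; tauto
    have hset2 : {ω | Z ω = z ∧ X ω = x} = {ω | X ω = x ∧ Z ω = z} := by
      ext ω; simp only [Set.mem_setOf_eq]; tauto
    have h2 := congrArg ENNReal.toReal (hCI_a z d x)
    rw [hset1, hset2, ENNReal.toReal_mul, ENNReal.toReal_mul] at h2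
    field_simp
    linarith [h2]
  -- the core identity: k x = ∑ d, G d l * (weight of d given X = x), for every l
  have hkl : ∀ (x : Xt) (l : Lt),
      k x = ∑ d, G d l * ((μ {ω | δ ω = d ∧ X ω = x}).toReal / (μ {ω | X ω = x}).toReal) := by
    intro x l
    obtain ⟨z, hz, hq⟩ := hsurj x l
    have hqr : (μ {ω | X ω = x ∧ Z ω = z}).toReal ≠ 0 := by
      simp [ENNReal.toReal_ne_zero, hq.ne', measure_ne_top]
    have e1 := hk x z hq
    rw [hdec H x z] at e1
    have e2 : (∑ d, ∑ p, H (d, p) * (μ {ω | P ω = p ∧ X ω = x ∧ Z ω = z ∧ δ ω = d}).toReal) =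
        (μ {ω | X ω = x ∧ Z ω = z}).toReal * ∑ d, G d (lam x z) *
          ((μ {ω | δ ω = d ∧ X ω = x}).toReal / (μ {ω | X ω = x}).toReal) := by
      rw [Finset.mul_sum]
      refine Finset.sum_congr rfl fun d _ => ?_
      rw [key1 d x z, key2 d x z hq]
      ring
    rw [e2] at e1
    rw [← hz]
    apply mul_left_cancel₀ hqr
    linear_combination -e1
  -- apply completeness to H - G(·, l₀)
  refine ⟨fun d => G d l₀, ?_⟩
  have hz0 := hcomplete (fun y => H y - G y.1 l₀) ?_
  · filter_upwards [hz0] with ω hω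
    simp only [Pi.zero_apply, sub_eq_zero] at hω
    simpa using hω
  · intro x z hq
    have hint1 : Integrable (fun ω => H (δ ω, P ω)) (μ.restrict {ω | X ω = x ∧ Z ω = z}) :=
      aux_integrable _ (hδ.prodMk hP) H
    have hint2 : Integrable (fun ω => G (δ ω) l₀) (μ.restrict {ω | X ω = x ∧ Z ω = z}) :=
      aux_integrable _ hδ (fun d => G d l₀)
    have : (∫ ω in {ω | X ω = x ∧ Z ω = z}, (H (δ ω, P ω) - G (δ ω) l₀) ∂μ) =
        (∫ ω in {ω | X ω = x ∧ Z ω = z}, H (δ ω, P ω) ∂μ) -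
          (∫ ω in {ω | X ω = x ∧ Z ω = z}, G (δ ω) l₀ ∂μ) :=
      integral_sub hint1 hint2
    show (∫ ω in {ω | X ω = x ∧ Z ω = z}, (H (δ ω, P ω) - G (δ ω) l₀) ∂μ) = 0
    rw [this, hk x z hq, hdecD (fun d => G d l₀) x z]
    have e3 : (∑ d, G d l₀ * (μ {ω | X ω = x ∧ Z ω = z ∧ δ ω = d}).toReal) =
        (μ {ω | X ω = x ∧ Z ω = z}).toReal * ∑ d, G d l₀ *
          ((μ {ω | δ ω = d ∧ X ω = x}).toReal / (μ {ω | X ω = x}).toReal) := by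
      rw [Finset.mul_sum]
      refine Finset.sum_congr rfl fun d _ => ?_
      rw [key2 d x z hq]
      ring
    rw [e3, ← hkl x l₀]
    ring
end
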